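/- arXiv:1111.0684 — 2 statements merged into one kernel-verified Lean document; each statement's English description precedes it below -/
import Mathlib

section
/- Let g: ℝ → ℝ be bounded, measurable, with η(f) := g(f) + g(-f) strictly decreasing on (0,∞). Then for fixed variance σ² > 0, the Gaussian average N(μ, σ²)[g] := ∫_ℝ g(y) (1/(σ√(2π))) exp(-(y-μ)²/(2σ²)) dy, viewed at mean 0, strictly decreases as the variance increases; that is, if 0 < σ₁ < σ₂ then N(0, σ₂²)[g] < N(0, σ₁²)[g]. -/
open Real MeasureTheory Set

lemma integrable_mul_gauss {h : ℝ → ℝ} (hm : Measurable h) {M : ℝ} (hb : ∀ y, |h y| ≤ M) :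
    Integrable (fun x => h x * (Real.exp (-(x ^ 2) / 2) / Real.sqrt (2 * π))) := by
  have hc : (0:ℝ) < Real.sqrt (2 * π) := Real.sqrt_pos.mpr (by positivity)
  refine Integrable.mono'
    ((integrable_exp_neg_mul_sq (by norm_num : (0:ℝ) < 1/2)).mul_const (M / Real.sqrt (2 * π)))
    ((hm.mul (by fun_prop)).aestronglyMeasurable) ?_
  filter_upwards with x
  have hM : 0 ≤ M := le_trans (abs_nonneg _) (hb 0)
  have he : Real.exp (-(x ^ 2) / 2) = Real.exp (-(1/2 * x ^ 2)) := by ring_nf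
  rw [Real.norm_eq_abs, abs_mul, he]
  have hpos : 0 < Real.exp (-(1/2 * x ^ 2)) / Real.sqrt (2 * π) := by positivity
  have : |Real.exp (-(1/2 * x ^ 2)) / Real.sqrt (2 * π)|
      = Real.exp (-(1/2 * x ^ 2)) / Real.sqrt (2 * π) := abs_of_pos hpos
  rw [this]
  calc |h x| * (Real.exp (-(1/2 * x ^ 2)) / Real.sqrt (2 * π))
      ≤ M * (Real.exp (-(1/2 * x ^ 2)) / Real.sqrt (2 * π)) := by
        exact mul_le_mul_of_nonneg_right (hb x) hpos.le
    _ = Real.exp (-(1/2) * x ^ 2) * (M / Real.sqrt (2 * π)) := by ring_nf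

lemma gauss_change_of_var (h : ℝ → ℝ) {σ : ℝ} (hσ : 0 < σ) :
    (∫ y : ℝ, h y * (Real.exp (-(y ^ 2) / (2 * σ ^ 2)) / (σ * Real.sqrt (2 * π)))) =
    ∫ x : ℝ, h (σ * x) * (Real.exp (-(x ^ 2) / 2) / Real.sqrt (2 * π)) := by
  set F : ℝ → ℝ := fun y => h y * (Real.exp (-(y ^ 2) / (2 * σ ^ 2)) / (σ * Real.sqrt (2 * π)))
  have key := MeasureTheory.Measure.integral_comp_mul_left F σ
  have hF : ∀ x : ℝ, F (σ * x) = σ⁻¹ * (h (σ * x) * (Real.exp (-(x ^ 2) / 2) / Real.sqrt (2 * π))) := by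
    intro x
    have harg : -((σ * x) ^ 2) / (2 * σ ^ 2) = -(x ^ 2) / 2 := by
      field_simp
    simp only [F, harg]
    field_simp
  simp only [hF] at key
  rw [integral_const_mul] at key
  have habs : |σ⁻¹| = σ⁻¹ := abs_of_pos (inv_pos.mpr hσ)
  rw [habs, smul_eq_mul] at key
  have hne : σ⁻¹ ≠ 0 := ne_of_gt (inv_pos.mpr hσ)
  exact (mul_left_cancel₀ hne key.symm)

lemma integral_eq_Ioi_add (F : ℝ → ℝ) (hF : Integrable F) :
    ∫ x : ℝ, F x = ∫ x in Ioi (0:ℝ), (F x + F (-x)) := by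
  have h1 : (∫ x in Ioi (0:ℝ), F x) + ∫ x in (Ioi (0:ℝ))ᶜ, F x = ∫ x, F x :=
    integral_add_compl measurableSet_Ioi hF
  have hcompl : (Ioi (0:ℝ))ᶜ = Iic 0 := by simp
  have h2 : (∫ x in Ioi (0:ℝ), F (-x)) = ∫ x in Iic (0:ℝ), F x := by
    simpa using integral_comp_neg_Ioi (0:ℝ) F
  have hFneg : Integrable (fun x => F (-x)) := hF.comp_neg
  rw [integral_add (hF.integrableOn) (hFneg.integrableOn)]
  rw [h2, ← h1, hcompl]

theorem gaussian_average_decreasing_in_variance (g : ℝ → ℝ)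
    (hmeas : Measurable g) (hbdd : ∃ M, ∀ y, |g y| ≤ M)
    (hη : StrictAntiOn (fun f => g f + g (-f)) (Set.Ioi (0 : ℝ)))
    (σ₁ σ₂ : ℝ) (h1 : 0 < σ₁) (h12 : σ₁ < σ₂) :
    (∫ y : ℝ, g y * (Real.exp (-(y ^ 2) / (2 * σ₂ ^ 2)) / (σ₂ * Real.sqrt (2 * Real.pi)))) <
    (∫ y : ℝ, g y * (Real.exp (-(y ^ 2) / (2 * σ₁ ^ 2)) / (σ₁ * Real.sqrt (2 * Real.pi)))) := by
  obtain ⟨M, hM⟩ := hbdd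
  have h2 : 0 < σ₂ := h1.trans h12
  rw [gauss_change_of_var g h1, gauss_change_of_var g h2]
  set φ : ℝ → ℝ := fun x => Real.exp (-(x ^ 2) / 2) / Real.sqrt (2 * π) with hφ
  have hφpos : ∀ x, 0 < φ x := fun x => by
    have : (0:ℝ) < Real.sqrt (2 * π) := Real.sqrt_pos.mpr (by positivity)
    positivity
  have hφeven : ∀ x, φ (-x) = φ x := fun x => by simp [hφ, neg_sq]
  have hint : ∀ σ : ℝ, Integrable (fun x => g (σ * x) * φ x) := fun σ =>
    integrable_mul_gauss (hmeas.comp (measurable_const_mul σ)) (fun y => hM (σ * y))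
  set F : ℝ → ℝ := fun x => g (σ₁ * x) * φ x - g (σ₂ * x) * φ x with hFdef
  have hFint : Integrable F := (hint σ₁).sub (hint σ₂)
  have hkey : ∫ x, F x = ∫ x in Ioi (0:ℝ), (F x + F (-x)) := integral_eq_Ioi_add F hFint
  have hD : ∀ x, F x + F (-x) =
      ((g (σ₁ * x) + g (-(σ₁ * x))) - (g (σ₂ * x) + g (-(σ₂ * x)))) * φ x := by
    intro x
    simp only [hFdef, hφeven, mul_neg]
    ring
  have hpos : 0 < ∫ x in Ioi (0:ℝ), (F x + F (-x)) := by
    rw [setIntegral_pos_iff_support_of_nonneg_ae]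
    · have hsub : Ioi (0:ℝ) ⊆ Function.support (fun x => F x + F (-x)) ∩ Ioi 0 := by
        intro x hx
        have hx0 : (0:ℝ) < x := hx
        have hη' : (g (σ₂ * x) + g (-(σ₂ * x))) < (g (σ₁ * x) + g (-(σ₁ * x))) :=
          hη (by simp [Set.mem_Ioi]; positivity) (by simp [Set.mem_Ioi]; positivity)
            (by nlinarith)
        refine ⟨?_, hx⟩
        rw [Function.mem_support, hD x]
        exact ne_of_gt (mul_pos (sub_pos.mpr hη') (hφpos x))
      refine lt_of_lt_of_le ?_ (measure_mono hsub)
      simp [Real.volume_Ioi]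
    · filter_upwards [ae_restrict_mem measurableSet_Ioi] with x hx
      have hx0 : (0:ℝ) < x := hx
      have hη' : (g (σ₂ * x) + g (-(σ₂ * x))) < (g (σ₁ * x) + g (-(σ₁ * x))) :=
        hη (by simp [Set.mem_Ioi]; positivity) (by simp [Set.mem_Ioi]; positivity)
          (by nlinarith)
      rw [Pi.zero_apply, hD x]
      exact (mul_pos (sub_pos.mpr hη') (hφpos x)).le
    · exact (hFint.add hFint.comp_neg).integrableOn
  rw [← hkey] at hpos
  rw [integral_sub (hint σ₁) (hint σ₂)] at hpos
  simp only [hφ] at hpos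
  linarith
end

section
/- Let g: ℝ → ℝ be C², bounded, with bounded first and second derivatives, and suppose there exist f_* ∈ (0, 1/2) and m > 0 such that η''(y) < -m for all y ∈ [-f_*, f_*], where η(y) = g(y) + g(-y), and η is decreasing in |y|. Define G(r) = E[g(Z - rs/2)] where Z ~ N(0, s²/4). Then there exists s_* > 0 such that for all s ∈ (0, s_*) and all r > 0, (1/2)(G(r) + G(-r)) < G(0). -/
/-!
Write `η y = g y + g (-y)`, `a = r s / 2` and `γ` for the centred Gaussian of variance `s² / 4`.
Since `γ` is symmetric, `2 (G r + G (-r)) = ∫ (η (z - a) + η (z + a)) dγ` and `2 G 0 = ∫ η dγ`, so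
it suffices that the second symmetric difference `η (z - a) + η (z + a) - 2 η z` has negative
`γ`-mean. Pointwise it is at most `-c + c κ z²` with `c > 0` depending on `a` but `κ` not: for
`a ≤ f*/2` strict concavity gives `-m a²` on `|z| ≤ f*/2` and the curvature bound controls the
tails, while for `a > f*/2` one of `z ± a` lies at distance `≥ f*/2` from `0`, where `η` has
dropped by `m f*² / 8` below `η 0`. Integrating against `γ` gives `-c (1 - κ s² / 4) < 0` for
small `s`.
-/

open Real MeasureTheory Set ProbabilityTheory
open scoped NNReal

lemma le_add_mul_sq_div_two_of_deriv2_le {φ φ' φ'' : ℝ → ℝ} {K a : ℝ} (ha : 0 ≤ a)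
    (hφ : ∀ t, HasDerivAt φ (φ' t) t) (hφ' : ∀ t, HasDerivAt φ' (φ'' t) t)
    (h0 : φ' 0 = 0) (hK : ∀ t ∈ Icc 0 a, φ'' t ≤ K) :
    φ a ≤ φ 0 + K * a ^ 2 / 2 := by
  have mono : ∀ {f f' : ℝ → ℝ}, (∀ t, HasDerivAt f (f' t) t) → (∀ t ∈ Icc 0 a, 0 ≤ f' t) →
      MonotoneOn f (Icc 0 a) := fun hf hf' =>
    monotoneOn_of_hasDerivWithinAt_nonneg (convex_Icc 0 a)
      (fun t _ => (hf t).continuousAt.continuousWithinAt) (fun t _ => (hf t).hasDerivWithinAt)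
      (fun t ht => hf' t (interior_subset ht))
  have slope_le : ∀ t ∈ Icc 0 a, φ' t ≤ K * t := by
    intro t ht
    have := mono (f := fun t => t * K - φ' t) (fun t => (hasDerivAt_mul_const K).sub (hφ' t))
      (fun t ht => sub_nonneg.2 (hK t ht)) ⟨le_rfl, ha⟩ ht ht.1
    simp only [zero_mul, h0, sub_zero] at this
    linarith
  have key := mono (f := fun t => φ 0 + K * t ^ 2 / 2 - φ t) (f' := fun t => K * t - φ' t)
    (fun t => (((((hasDerivAt_pow 2 t).const_mul K).div_const 2).const_add (φ 0)).sub
      (hφ t)).congr_deriv (by push_cast; ring))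
    (fun t ht => sub_nonneg.2 (slope_le t ht)) ⟨le_rfl, ha⟩ ⟨ha, le_rfl⟩ ha
  simp only at key
  linarith

lemma ContDiff.hasDerivAt_deriv {f : ℝ → ℝ} (hf : ContDiff ℝ 2 f) (y : ℝ) :
    HasDerivAt (deriv f) (iteratedDeriv 2 f y) y := by
  rw [iteratedDeriv_succ, iteratedDeriv_one]
  exact ((contDiff_succ_iff_deriv (n := 1).mp hf).2.2.differentiable one_ne_zero y).hasDerivAt

lemma sub_add_add_le_of_iteratedDeriv_two_le {η : ℝ → ℝ} (hη : ContDiff ℝ 2 η) {z a K : ℝ}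
    (ha : 0 ≤ a)
    (hK : ∀ t ∈ Icc 0 a, iteratedDeriv 2 η (z + t) + iteratedDeriv 2 η (z - t) ≤ K) :
    η (z - a) + η (z + a) ≤ 2 * η z + K * a ^ 2 / 2 := by
  have h1 (y : ℝ) : HasDerivAt η (deriv η y) y :=
    (hη.differentiable two_ne_zero y).hasDerivAt
  have := le_add_mul_sq_div_two_of_deriv2_le (φ := fun t => η (z + t) + η (z - t)) ha
    (fun t => ((h1 _).comp_const_add z t).add ((h1 _).comp_const_sub z t))
    (fun t => ((hη.hasDerivAt_deriv _).comp_const_add z t).sub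
      ((hη.hasDerivAt_deriv _).comp_const_sub z t)) (by simp) (by simpa using hK)
  simp only [add_zero, sub_zero] at this
  linarith

section Profile

variable {η : ℝ → ℝ} {B m f : ℝ}

lemma eq_of_abs_eq_of_antitone_abs (hη_abs : ∀ a b, |a| ≤ |b| → η b ≤ η a) {a b : ℝ}
    (h : |a| = |b|) : η a = η b :=
  le_antisymm (hη_abs _ _ h.ge) (hη_abs _ _ h.le)

lemma sub_add_add_le_sub_mul_sq (hη : ContDiff ℝ 2 η)
    (hconc : ∀ y ∈ Icc (-f) f, iteratedDeriv 2 η y ≤ -m) {z a : ℝ} (ha : 0 ≤ a)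
    (hza : |z| + a ≤ f) : η (z - a) + η (z + a) ≤ 2 * η z - m * a ^ 2 := by
  have := sub_add_add_le_of_iteratedDeriv_two_le hη (K := -2 * m) ha fun t ht => by
    have h₁ := hconc (z + t) (abs_le.1 ((abs_add_le z t).trans (by grind [abs_of_nonneg])))
    have h₂ := hconc (z - t) (abs_le.1 ((abs_sub z t).trans (by grind [abs_of_nonneg])))
    linarith
  linarith

lemma sub_add_add_le_add_mul_sq (hη : ContDiff ℝ 2 η)
    (hB : ∀ y, |iteratedDeriv 2 η y| ≤ B) {z a : ℝ} (ha : 0 ≤ a) :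
    η (z - a) + η (z + a) ≤ 2 * η z + B * a ^ 2 := by
  have := sub_add_add_le_of_iteratedDeriv_two_le hη (K := 2 * B) ha fun t _ => by
    linarith [(abs_le.1 (hB (z + t))).2, (abs_le.1 (hB (z - t))).2]
  linarith

lemma sub_mul_sq_div_two_le (hη : ContDiff ℝ 2 η)
    (hB : ∀ y, |iteratedDeriv 2 η y| ≤ B) (hη_abs : ∀ a b, |a| ≤ |b| → η b ≤ η a) (t : ℝ) :
    η 0 - B * t ^ 2 / 2 ≤ η t := by
  have := sub_add_add_le_of_iteratedDeriv_two_le hη.neg (z := 0) (K := 2 * B) (abs_nonneg t)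
    fun s _ => by
      simp only [iteratedDeriv_fun_neg]
      linarith [(abs_le.1 (hB (0 + s))).1, (abs_le.1 (hB (0 - s))).1]
  have h₁ : η (0 - |t|) = η t := eq_of_abs_eq_of_antitone_abs hη_abs (by simp)
  have h₂ : η (0 + |t|) = η t := eq_of_abs_eq_of_antitone_abs hη_abs (by simp)
  rw [h₁, h₂, sq_abs] at this
  linarith

lemma sub_add_add_le_of_half_le (hη : ContDiff ℝ 2 η)
    (hconc : ∀ y ∈ Icc (-f) f, iteratedDeriv 2 η y ≤ -m)
    (hη_abs : ∀ a b, |a| ≤ |b| → η b ≤ η a) (hf : 0 ≤ f) {a : ℝ} (haf : f / 2 ≤ a) (z : ℝ) :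
    η (z - a) + η (z + a) ≤ 2 * η 0 - m * f ^ 2 / 8 := by
  have hfar : ∀ y, a ≤ |y| → η y ≤ η 0 - m * f ^ 2 / 8 := by
    intro y hy
    have := sub_add_add_le_sub_mul_sq hη hconc (z := 0) (a := f / 2) (by positivity)
      (by rw [abs_zero, zero_add]; linarith)
    have h₁ : η (0 - f / 2) = η (f / 2) := eq_of_abs_eq_of_antitone_abs hη_abs (by simp)
    have h₂ := hη_abs (f / 2) y (by rw [abs_of_nonneg (by positivity)]; linarith)
    simp only [zero_add] at this h₁
    linarith
  have hnear : ∀ y, η y ≤ η 0 := fun y => hη_abs 0 y (by simp)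
  rcases le_total 0 z with hz | hz
  · linarith [hnear (z - a), hfar (z + a) (by rw [abs_of_nonneg (by linarith)]; linarith)]
  · linarith [hnear (z + a), hfar (z - a) (by rw [abs_of_nonpos (by linarith)]; linarith)]

lemma exists_sub_add_add_le (hη : ContDiff ℝ 2 η) (hB : ∀ y, |iteratedDeriv 2 η y| ≤ B)
    (hconc : ∀ y ∈ Icc (-f) f, iteratedDeriv 2 η y ≤ -m)
    (hη_abs : ∀ a b, |a| ≤ |b| → η b ≤ η a) (hm : 0 < m) (hf : 0 < f) {a : ℝ} (ha : 0 < a) :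
    ∃ c > 0, ∀ z,
      η (z - a) + η (z + a) ≤ 2 * η z - c + c * (8 * (m + B) / (m * f ^ 2)) * z ^ 2 := by
  have hB0 : 0 ≤ B := (abs_nonneg _).trans (hB 0)
  rcases le_or_gt a (f / 2) with haf | haf
  · refine ⟨m * a ^ 2, by positivity, fun z => ?_⟩
    have hcκ : m * a ^ 2 * (8 * (m + B) / (m * f ^ 2)) * z ^ 2 =
        8 * (m + B) * a ^ 2 * (z / f) ^ 2 := by
      field_simp
    rw [hcκ]
    rcases le_or_gt |z| (f / 2) with hz | hz
    · have := sub_add_add_le_sub_mul_sq hη hconc ha.le (z := z) (by linarith)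
      have : 0 ≤ 8 * (m + B) * a ^ 2 * (z / f) ^ 2 := by positivity
      linarith
    · have h4 : 1 / 4 ≤ (z / f) ^ 2 := by
        rw [div_pow, le_div_iff₀ (by positivity), ← sq_abs z]
        nlinarith
      have := sub_add_add_le_add_mul_sq hη hB ha.le (z := z)
      have : 8 * (m + B) * a ^ 2 * (1 / 4) ≤ 8 * (m + B) * a ^ 2 * (z / f) ^ 2 :=
        mul_le_mul_of_nonneg_left h4 (by positivity)
      nlinarith [sq_nonneg a]
  · refine ⟨m * f ^ 2 / 8, by positivity, fun z => ?_⟩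
    have hcκ : m * f ^ 2 / 8 * (8 * (m + B) / (m * f ^ 2)) = m + B := by
      field_simp
    rw [hcκ]
    have := sub_add_add_le_of_half_le hη hconc hη_abs hf.le haf.le z
    have := sub_mul_sq_div_two_le hη hB hη_abs z
    nlinarith [sq_nonneg z]

end Profile

lemma Continuous.integrable_of_abs_le {α : Type*} [TopologicalSpace α] [MeasurableSpace α]
    [OpensMeasurableSpace α] {μ : Measure α} [IsFiniteMeasure μ] {F : α → ℝ} (hF : Continuous F)
    {M : ℝ} (hM : ∀ x, |F x| ≤ M) : Integrable F μ :=
  Integrable.of_bound hF.aestronglyMeasurable M (ae_of_all _ hM)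

section Gaussian

variable {v : ℝ≥0}

lemma integral_gaussianReal_eq_integral_mul {v : ℝ} (hv : 0 < v) (F : ℝ → ℝ) :
    ∫ z, F z * (exp (-(z ^ 2) / (2 * v)) / √(2 * π * v)) =
      ∫ z, F z ∂gaussianReal 0 v.toNNReal := by
  rw [integral_gaussianReal_eq_integral_smul (by simpa using hv)]
  congr 1 with z
  rw [gaussianPDFReal, Real.coe_toNNReal _ hv.le, sub_zero, smul_eq_mul]
  ring

lemma integral_comp_neg_gaussianReal {E : Type*} [NormedAddCommGroup E] [NormedSpace ℝ E]
    (F : ℝ → E) : ∫ x, F (-x) ∂gaussianReal 0 v = ∫ x, F x ∂gaussianReal 0 v := by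
  calc ∫ x, F (-x) ∂gaussianReal 0 v = ∫ x, F x ∂(gaussianReal 0 v).map (fun x => -x) :=
        (integral_map_equiv (MeasurableEquiv.neg ℝ) F).symm
    _ = ∫ x, F x ∂gaussianReal 0 v := by rw [gaussianReal_map_neg, neg_zero]

lemma integral_sq_gaussianReal : ∫ x, x ^ 2 ∂gaussianReal 0 v = v := by
  have := variance_eq_integral (X := fun x => x) aemeasurable_id' (μ := gaussianReal 0 v)
  rw [variance_fun_id_gaussianReal, integral_id_gaussianReal] at this
  simpa using this.symm

lemma integral_sub_add_add_lt {η : ℝ → ℝ} (hη : Continuous η) {M : ℝ} (hM : ∀ y, |η y| ≤ M)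
    {a c κ : ℝ} (hc : 0 < c) (hκ : κ * v < 1)
    (hpair : ∀ z, η (z - a) + η (z + a) ≤ 2 * η z - c + c * κ * z ^ 2) :
    ∫ z, (η (z - a) + η (z + a)) ∂gaussianReal 0 v < 2 * ∫ z, η z ∂gaussianReal 0 v := by
  have hint (b : ℝ) : Integrable (fun z => η (z + b)) (gaussianReal 0 v) :=
    (hη.comp (continuous_add_const b)).integrable_of_abs_le fun z => hM _
  have hη_int : Integrable η (gaussianReal 0 v) := hη.integrable_of_abs_le hM
  have hlin : Integrable (fun z => 2 * η z - c) (gaussianReal 0 v) :=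
    (hη_int.const_mul 2).sub' (integrable_const c)
  have hsq : Integrable (fun z => c * κ * z ^ 2) (gaussianReal 0 v) :=
    (memLp_id_gaussianReal 2).integrable_sq.const_mul (c * κ)
  calc ∫ z, (η (z - a) + η (z + a)) ∂gaussianReal 0 v
      ≤ ∫ z, (2 * η z - c + c * κ * z ^ 2) ∂gaussianReal 0 v := by
        refine integral_mono ?_ (hlin.fun_add hsq) hpair
        simpa [sub_eq_add_neg] using (hint (-a)).fun_add (hint a)
    _ = 2 * ∫ z, η z ∂gaussianReal 0 v - c * (1 - κ * v) := by
        rw [integral_add hlin hsq, integral_sub (hη_int.const_mul 2) (integrable_const c),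
          integral_const_mul, integral_const_mul, integral_sq_gaussianReal, integral_const,
          probReal_univ, smul_eq_mul]
        ring
    _ < 2 * ∫ z, η z ∂gaussianReal 0 v := by nlinarith

lemma integral_add_comp_neg_gaussianReal {F : ℝ → ℝ} (hF : Continuous F) {M : ℝ}
    (hM : ∀ x, |F x| ≤ M) :
    ∫ z, (F z + F (-z)) ∂gaussianReal 0 v = 2 * ∫ z, F z ∂gaussianReal 0 v := by
  have hneg : Integrable (fun z => F (-z)) (gaussianReal 0 v) :=
    (hF.comp continuous_neg).integrable_of_abs_le fun z => hM (-z)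
  rw [integral_add (hF.integrable_of_abs_le hM) hneg, integral_comp_neg_gaussianReal]
  ring

lemma integral_sub_add_add_eq {g : ℝ → ℝ} (hg : Continuous g) {M : ℝ} (hM : ∀ x, |g x| ≤ M)
    (a : ℝ) :
    ∫ z, ((g (z - a) + g (-(z - a))) + (g (z + a) + g (-(z + a)))) ∂gaussianReal 0 v =
      2 * (∫ z, g (z - a) ∂gaussianReal 0 v + ∫ z, g (z + a) ∂gaussianReal 0 v) := by
  have hsub : Integrable (fun z => g (z - a)) (gaussianReal 0 v) :=
    (hg.comp (continuous_sub_right a)).integrable_of_abs_le fun z => hM (z - a)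
  have hadd : Integrable (fun z => g (z + a)) (gaussianReal 0 v) :=
    (hg.comp (continuous_add_const a)).integrable_of_abs_le fun z => hM (z + a)
  rw [← integral_add hsub hadd,
    ← integral_add_comp_neg_gaussianReal (F := fun z => g (z - a) + g (z + a)) (by fun_prop)
      (M := 2 * M) fun z => (abs_add_le _ _).trans (by linarith [hM (z - a), hM (z + a)])]
  congr 1 with z
  ring_nf

end Gaussian

theorem G_concavity_general (g : ℝ → ℝ)
    (hsmooth : ContDiff ℝ 2 g)
    (hbdd : ∃ M, ∀ y, |g y| ≤ M)
    (hbdd2 : ∃ M, ∀ y, |iteratedDeriv 2 g y| ≤ M)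
    (fstar m : ℝ) (hf1 : 0 < fstar) (hm : 0 < m)
    (hconc : ∀ y ∈ Set.Icc (-fstar) fstar,
      iteratedDeriv 2 (fun x => g x + g (-x)) y < -m)
    (hdec : ∀ a b : ℝ, |a| ≤ |b| → g b + g (-b) ≤ g a + g (-a))
    (G : ℝ → ℝ → ℝ)
    (hG : ∀ s r : ℝ, G s r =
      ∫ z : ℝ, g (z - r * s / 2) *
        (Real.exp (-(z ^ 2) / (2 * (s ^ 2 / 4))) / Real.sqrt (2 * Real.pi * (s ^ 2 / 4)))) :
    ∃ sstar : ℝ, 0 < sstar ∧ ∀ s : ℝ, 0 < s → s < sstar → ∀ r : ℝ, 0 < r →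
      (1 / 2) * (G s r + G s (-r)) < G s 0 := by
  obtain ⟨M, hM⟩ := hbdd
  obtain ⟨M₂, hM₂⟩ := hbdd2
  have hM₂0 : 0 ≤ M₂ := (abs_nonneg _).trans (hM₂ 0)
  have hη : ContDiff ℝ 2 fun x => g x + g (-x) := hsmooth.add (hsmooth.comp contDiff_neg)
  have hη₂ (y : ℝ) : |iteratedDeriv 2 (fun x => g x + g (-x)) y| ≤ 2 * M₂ := by
    rw [iteratedDeriv_fun_add (f := g) (g := fun x => g (-x)) hsmooth.contDiffAt
      (hsmooth.comp contDiff_neg).contDiffAt, iteratedDeriv_comp_neg, neg_one_sq, one_smul]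
    linarith [(abs_add_le _ _).trans (add_le_add (hM₂ y) (hM₂ (-y)))]
  set κ := 8 * (m + 2 * M₂) / (m * fstar ^ 2)
  have hκ : 0 < κ := by positivity
  refine ⟨2 / √κ, by positivity, fun s hs hss r hr => ?_⟩
  have hv : 0 < s ^ 2 / 4 := by positivity
  have hκv : κ * (s ^ 2 / 4).toNNReal < 1 := by
    rw [Real.coe_toNNReal _ hv.le]
    rw [lt_div_iff₀ (by positivity)] at hss
    have : (s * √κ) ^ 2 < 2 ^ 2 := pow_lt_pow_left₀ hss (by positivity) two_ne_zero
    rw [mul_pow, Real.sq_sqrt hκ.le] at this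
    linarith
  obtain ⟨c, hc, hpair⟩ := exists_sub_add_add_le hη hη₂ (fun y hy => (hconc y hy).le) hdec hm hf1
    (a := r * s / 2) (by positivity)
  have key := integral_sub_add_add_lt hη.continuous (M := 2 * M)
    (fun y => (abs_add_le _ _).trans (by linarith [hM y, hM (-y)])) hc hκv hpair
  rw [integral_sub_add_add_eq hsmooth.continuous hM,
    integral_add_comp_neg_gaussianReal hsmooth.continuous hM] at key
  simp only [hG, integral_gaussianReal_eq_integral_mul hv]
  simp only [neg_mul, neg_div, sub_neg_eq_add, zero_mul, zero_div, sub_zero]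
  linarith

theorem G_concavity (g : ℝ → ℝ)
    (hsmooth : ContDiff ℝ 2 g)
    (hbdd : ∃ M, ∀ y, |g y| ≤ M)
    (hbdd1 : ∃ M, ∀ y, |deriv g y| ≤ M)
    (hbdd2 : ∃ M, ∀ y, |iteratedDeriv 2 g y| ≤ M)
    (fstar m : ℝ) (hf1 : 0 < fstar) (hf2 : fstar < 1 / 2) (hm : 0 < m)
    (hconc : ∀ y ∈ Set.Icc (-fstar) fstar,
      iteratedDeriv 2 (fun x => g x + g (-x)) y < -m)
    (hdec : ∀ a b : ℝ, |a| ≤ |b| → g b + g (-b) ≤ g a + g (-a))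
    (G : ℝ → ℝ → ℝ)
    (hG : ∀ s r : ℝ, G s r =
      ∫ z : ℝ, g (z - r * s / 2) *
        (Real.exp (-(z ^ 2) / (2 * (s ^ 2 / 4))) / Real.sqrt (2 * Real.pi * (s ^ 2 / 4)))) :
    ∃ sstar : ℝ, 0 < sstar ∧ ∀ s : ℝ, 0 < s → s < sstar → ∀ r : ℝ, 0 < r →
      (1 / 2) * (G s r + G s (-r)) < G s 0 :=
  G_concavity_general g hsmooth hbdd hbdd2 fstar m hf1 hm hconc hdec G hG
end
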